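/- The advected density satisfies the continuity equation: if ρ : ℝ × ℝⁿ → ℝ is continuously differentiable and satisfies the push-forward relation ρ(t, g(t,l)) · det(D_l g(t,l)) = ρ₀(l) for all (t,l), where ρ₀ : ℝⁿ → ℝ, and for each t the map l ↦ g(t,l) is a bijection of ℝⁿ, then ∂_t ρ(t,x) + div(ρ u)(t,x) = 0 for all (t,x) ∈ ℝ × ℝⁿ. -/

import Mathlib

/-!
Fix `(t, x)` and write `x = g(t, l)`. Along the trajectory `s ↦ g(s, l)` the quantity
`ρ(s, g(s, l)) · J(s)` with `J(s) = det D_l g(s, l)` is constant. The flow is `C²`, because both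
of its partial differentials, `u(t, g)` and `D_l g`, are `C¹`; hence mixed partials commute and
`∂_s D_l g = D_x u · D_l g`, so Jacobi's formula gives `J' = (div u) J`. Differentiating the
constant and dividing by `J ≠ 0` yields `∂_t ρ + Dρ · u + ρ div u = 0`, which is the continuity
equation since `div (ρ u) = Dρ · u + ρ div u`.
-/

open ContinuousLinearMap

namespace Matrix

variable {ι : Type*} [Fintype ι] [DecidableEq ι]

theorem sum_det_updateRow_mul {R : Type*} [CommRing R] (A B : Matrix ι ι R) :
    ∑ i, (A.updateRow i ((B * A) i)).det = B.trace * A.det := by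
  have hrow : ∀ i, (B * A) i = ∑ k, B i k • A k := fun i => by
    ext j; simp [mul_apply, Finset.sum_apply]
  simp_rw [hrow, det_updateRow_sum, trace, diag, Finset.sum_mul, smul_eq_mul]

theorem hasDerivAt_det {𝕜 : Type*} [NontriviallyNormedField 𝕜] {M : 𝕜 → Matrix ι ι 𝕜}
    {M' : Matrix ι ι 𝕜} {t : 𝕜} (hM : ∀ i j, HasDerivAt (fun s => M s i j) (M' i j) t) :
    HasDerivAt (fun s => (M s).det) (∑ i, ((M t).updateRow i (M' i)).det) t := by
  let D : ContinuousMultilinearMap 𝕜 (fun _ : ι => ι → 𝕜) 𝕜 :=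
    ⟨detRowAlternating.toMultilinearMap, continuous_id.matrix_det⟩
  have hrows : HasDerivAt (F := ι → ι → 𝕜) M M' t :=
    hasDerivAt_pi.2 fun i => hasDerivAt_pi.2 (hM i)
  exact ((D.hasFDerivAt (M t)).comp_hasDerivAt t hrows).congr_deriv (D.linearDeriv_apply _ _)

end Matrix

section Coordinates

variable {ι 𝕜 : Type*} [Fintype ι] [DecidableEq ι] [NontriviallyNormedField 𝕜]

theorem LinearMap.trace_eq_sum_apply_single {R : Type*} [CommRing R]
    (L : (ι → R) →ₗ[R] ι → R) : LinearMap.trace R _ L = ∑ i, L (Pi.single i 1) i := by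
  simp [LinearMap.trace_eq_matrix_trace R (Pi.basisFun R ι), LinearMap.toMatrix_eq_toMatrix',
    Matrix.trace, LinearMap.toMatrix'_apply]

/-- Jacobi's formula for a path of the form `A' = B A`. -/
theorem ContinuousLinearMap.hasDerivAt_det {A : 𝕜 → (ι → 𝕜) →L[𝕜] ι → 𝕜}
    {B : (ι → 𝕜) →L[𝕜] ι → 𝕜} {t : 𝕜} (hA : HasDerivAt A (B ∘L A t) t) :
    HasDerivAt (fun s => (A s).det)
      (LinearMap.trace 𝕜 _ (B : (ι → 𝕜) →ₗ[𝕜] ι → 𝕜) * (A t).det) t := by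
  let toMatrix (L : (ι → 𝕜) →L[𝕜] ι → 𝕜) := LinearMap.toMatrix' (L : (ι → 𝕜) →ₗ[𝕜] ι → 𝕜)
  have hentries : ∀ i j, HasDerivAt (fun s => toMatrix (A s) i j)
      ((toMatrix B * toMatrix (A t)) i j) t := by
    intro i j
    rw [← LinearMap.toMatrix'_comp]
    simpa [toMatrix, LinearMap.toMatrix'_apply] using
      hasDerivAt_pi.1 (hA.clm_apply (hasDerivAt_const t (Pi.single j 1))) i
  have hJ := Matrix.hasDerivAt_det hentries
  rw [Matrix.sum_det_updateRow_mul] at hJ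
  simpa [toMatrix, LinearMap.trace_eq_matrix_trace 𝕜 (Pi.basisFun 𝕜 ι),
    LinearMap.toMatrix_eq_toMatrix', ContinuousLinearMap.det, LinearMap.det_toMatrix'] using hJ

theorem sum_fderiv_mul_apply_single {φ : (ι → 𝕜) → 𝕜} {V : (ι → 𝕜) → ι → 𝕜} {x : ι → 𝕜}
    (hφ : DifferentiableAt 𝕜 φ x) (hV : DifferentiableAt 𝕜 V x) :
    ∑ j, fderiv 𝕜 (fun y => φ y * V y j) x (Pi.single j 1)
      = fderiv 𝕜 φ x (V x) + φ x * LinearMap.trace 𝕜 _ (fderiv 𝕜 V x : (ι → 𝕜) →ₗ[𝕜] ι → 𝕜) := by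
  have hVx : fderiv 𝕜 φ x (V x) = ∑ j, V x j * fderiv 𝕜 φ x (Pi.single j 1) := by
    conv_lhs => rw [pi_eq_sum_univ' (V x)]
    simp only [map_sum, map_smul, smul_eq_mul]
  have hterm : ∀ j, fderiv 𝕜 (fun y => φ y * V y j) x (Pi.single j 1)
      = V x j * fderiv 𝕜 φ x (Pi.single j 1) + φ x * fderiv 𝕜 V x (Pi.single j 1) j := by
    intro j
    have hVj : HasFDerivAt (fun y => V y j) (proj j ∘L fderiv 𝕜 V x) x :=
      (hasFDerivAt_apply (𝕜 := 𝕜) j (V x)).comp x hV.hasFDerivAt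
    rw [(hφ.hasFDerivAt.fun_mul hVj).fderiv]
    simp only [add_apply, smul_apply, comp_apply, proj_apply, smul_eq_mul]
    ring
  rw [Finset.sum_congr rfl fun j _ => hterm j, Finset.sum_add_distrib, ← Finset.mul_sum, hVx,
    LinearMap.trace_eq_sum_apply_single]
  rfl

end Coordinates

section Partials

variable {𝕜 E G : Type*} [NontriviallyNormedField 𝕜] [NormedAddCommGroup E] [NormedSpace 𝕜 E]
  [NormedAddCommGroup G] [NormedSpace 𝕜 G] {f : 𝕜 × E → G} {f' : 𝕜 × E →L[𝕜] G} {t : 𝕜} {y : E}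

theorem HasFDerivAt.hasDerivAt_comp_prodMk_const (hf : HasFDerivAt f f' (t, y)) :
    HasDerivAt (fun s => f (s, y)) (f' (1, 0)) t := by
  simpa [Function.comp_def] using
    hf.comp_hasDerivAt t ((hasDerivAt_id t).prodMk (hasDerivAt_const t y))

theorem HasFDerivAt.hasFDerivAt_comp_const_prodMk (hf : HasFDerivAt f f' (t, y)) :
    HasFDerivAt (fun y' => f (t, y')) (f' ∘L inr 𝕜 𝕜 E) y :=
  hf.comp y (hasFDerivAt_prodMk_right t y)

theorem contDiff_two_of_hasDerivAt_fst_of_contDiff_fderiv_snd (hf : ContDiff 𝕜 1 f)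
    {V : 𝕜 × E → G} (hV : ContDiff 𝕜 1 V)
    (hfV : ∀ t y, HasDerivAt (fun s => f (s, y)) (V (t, y)) t)
    (hD : ContDiff 𝕜 1 fun p : 𝕜 × E => fderiv 𝕜 (fun y => f (p.1, y)) p.2) :
    ContDiff 𝕜 2 f := by
  have hdf : ∀ p, HasFDerivAt f (fderiv 𝕜 f p) p :=
    fun p => (hf.differentiable one_ne_zero p).hasFDerivAt
  have hsplit : fderiv 𝕜 f = fun p => coprodEquivL 𝕜
      (smulRight (1 : 𝕜 →L[𝕜] 𝕜) (V p), fderiv 𝕜 (fun y => f (p.1, y)) p.2) := by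
    funext p
    show _ = coprod _ _
    rw [← coprod_comp_inl_inr (fderiv 𝕜 f p)]
    congr 1
    · ext
      simpa using (hdf p).hasDerivAt_comp_prodMk_const.unique (hfV p.1 p.2)
    · exact ((hdf p).hasFDerivAt_comp_const_prodMk).fderiv.symm
  rw [show (2 : WithTop ℕ∞) = 1 + 1 from rfl, contDiff_succ_iff_fderiv, hsplit]
  refine ⟨hf.differentiable one_ne_zero, by simp, ?_⟩
  exact (coprodEquivL 𝕜).contDiff.comp (((smulRightL 𝕜 𝕜 G 1).contDiff.comp hV).prodMk hD)

/-- Schwarz's theorem in the form `∂_s D_y f = D_y ∂_s f`. -/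
theorem ContDiff.hasDerivAt_fderiv_comp_const_prodMk [IsRCLikeNormedField 𝕜]
    (hf : ContDiff 𝕜 2 f) {φ : E → G} (hφ : ∀ y, HasDerivAt (fun s => f (s, y)) (φ y) t)
    {Φ : E →L[𝕜] G} (hΦ : HasFDerivAt φ Φ y) :
    HasDerivAt (fun s => fderiv 𝕜 (fun y' => f (s, y')) y) Φ t := by
  have hdf : ∀ p, HasFDerivAt f (fderiv 𝕜 f p) p :=
    fun p => (hf.differentiable two_ne_zero p).hasFDerivAt
  set f'' := fderiv 𝕜 (fderiv 𝕜 f) (t, y)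
  have hd2f : HasFDerivAt (fderiv 𝕜 f) f'' (t, y) :=
    ((hf.fderiv_right (m := 1) le_rfl).differentiable one_ne_zero _).hasFDerivAt
  have hφ_eq : φ = fun y' => fderiv 𝕜 f (t, y') (1, 0) :=
    funext fun y' => (hφ y').unique (hdf (t, y')).hasDerivAt_comp_prodMk_const
  have hΦ_eq : ∀ v, Φ v = f'' (1, 0) (0, v) := by
    intro v
    have h := hΦ.unique
      (hφ_eq ▸ hd2f.hasFDerivAt_comp_const_prodMk.clm_apply (hasFDerivAt_const (1, 0) y))
    rw [second_derivative_symmetric hdf hd2f, DFunLike.congr_fun h v]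
    simp
  have hslice : (fun s => fderiv 𝕜 (fun y' => f (s, y')) y)
      = fun s => fderiv 𝕜 f (s, y) ∘L inr 𝕜 𝕜 E :=
    funext fun s => (hdf (s, y)).hasFDerivAt_comp_const_prodMk.fderiv
  rw [hslice]
  convert hd2f.hasDerivAt_comp_prodMk_const.clm_comp (hasDerivAt_const t (inr 𝕜 𝕜 E)) using 1
  ext v
  simp [hΦ_eq]

theorem hasDerivAt_fderiv_flow [IsRCLikeNormedField 𝕜] {g u : 𝕜 × E → E} (hg : ContDiff 𝕜 2 g)
    (hu : Differentiable 𝕜 u) (hflow : ∀ t l, HasDerivAt (fun s => g (s, l)) (u (t, g (t, l))) t)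
    (t : 𝕜) (l : E) :
    HasDerivAt (fun s => fderiv 𝕜 (fun y => g (s, y)) l)
      ((fderiv 𝕜 u (t, g (t, l)) ∘L inr 𝕜 𝕜 E) ∘L fderiv 𝕜 (fun y => g (t, y)) l) t := by
  have hgt : DifferentiableAt 𝕜 (fun y => g (t, y)) l :=
    (hg.differentiable two_ne_zero _).hasFDerivAt.hasFDerivAt_comp_const_prodMk.differentiableAt
  exact hg.hasDerivAt_fderiv_comp_const_prodMk (hflow t)
    ((hu _).hasFDerivAt.hasFDerivAt_comp_const_prodMk.comp l hgt.hasFDerivAt)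

end Partials

/-- **The advected density satisfies the continuity equation.**
If `ρ : ℝ × ℝⁿ → ℝ` is continuously differentiable and satisfies the push-forward
relation `ρ(t, g(t,l)) · det (D_l g(t,l)) = ρ₀(l)` for all `(t, l)`, where for each `t`
the map `l ↦ g(t,l)` is a bijection of `ℝⁿ` (with everywhere-invertible spatial
differential), then `∂_t ρ(t,x) + div (ρ u)(t,x) = 0` for all `(t, x)`. -/
theorem advected_density_continuity_equation
    (n : ℕ)
    (g : ℝ × (Fin n → ℝ) → (Fin n → ℝ))
    (u : ℝ × (Fin n → ℝ) → (Fin n → ℝ))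
    (ρ : ℝ × (Fin n → ℝ) → ℝ)
    (ρ₀ : (Fin n → ℝ) → ℝ)
    (hg : ContDiff ℝ 1 g)
    (hDg : ContDiff ℝ 1 (fun p : ℝ × (Fin n → ℝ) =>
      fderiv ℝ (fun l => g (p.1, l)) p.2))
    (hDg_inv : ∀ (t : ℝ) (l : Fin n → ℝ),
      (fderiv ℝ (fun l' => g (t, l')) l).det ≠ 0)
    (hu : ContDiff ℝ 1 u)
    (hρ : ContDiff ℝ 1 ρ)
    (hflow : ∀ t l, deriv (fun s => g (s, l)) t = u (t, g (t, l)))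
    (hbij : ∀ t : ℝ, Function.Bijective (fun l => g (t, l)))
    (hpush : ∀ (t : ℝ) (l : Fin n → ℝ),
      ρ (t, g (t, l)) * (fderiv ℝ (fun l' => g (t, l')) l).det = ρ₀ l) :
    ∀ (t : ℝ) (x : Fin n → ℝ),
      deriv (fun s => ρ (s, x)) t
        + (∑ j, fderiv ℝ (fun x' => ρ (t, x') * u (t, x') j) x (Pi.single j 1)) = 0 := by
  intro t x
  obtain ⟨l, rfl⟩ := (hbij t).2 x
  have hdρ : ∀ p, HasFDerivAt ρ (fderiv ℝ ρ p) p :=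
    fun p => (hρ.differentiable one_ne_zero p).hasFDerivAt
  have hdu : ∀ p, HasFDerivAt u (fderiv ℝ u p) p :=
    fun p => (hu.differentiable one_ne_zero p).hasFDerivAt
  have htraj : ∀ t l, HasDerivAt (fun s => g (s, l)) (u (t, g (t, l))) t := fun t l =>
    hflow t l ▸ ((hg.differentiable one_ne_zero (t, l)).hasFDerivAt
      |>.hasDerivAt_comp_prodMk_const.differentiableAt.hasDerivAt)
  have hg2 : ContDiff ℝ 2 g := contDiff_two_of_hasDerivAt_fst_of_contDiff_fderiv_snd hg
    (hu.comp (contDiff_fst.prodMk hg)) htraj hDg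
  set p := (t, g (t, l))
  set divu := LinearMap.trace ℝ (Fin n → ℝ) (fderiv ℝ u p ∘L inr ℝ ℝ (Fin n → ℝ)).toLinearMap
  have hJ := ContinuousLinearMap.hasDerivAt_det
    (hasDerivAt_fderiv_flow hg2 (hu.differentiable one_ne_zero) htraj t l)
  have hρg : HasDerivAt (fun s => ρ (s, g (s, l))) (fderiv ℝ ρ p (1, u p)) t :=
    (hdρ p).comp_hasDerivAt t ((hasDerivAt_id t).prodMk (htraj t l))
  have hconserved := (hρg.fun_mul hJ).unique
    (by simpa only [hpush] using hasDerivAt_const t (ρ₀ l))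
  have hbalance : fderiv ℝ ρ p (1, u p) + ρ p * divu = 0 := by
    refine (mul_left_inj' (hDg_inv t l)).1 ?_
    linear_combination hconserved
  have hsplit : fderiv ℝ ρ p (1, u p) = fderiv ℝ ρ p (1, 0) + fderiv ℝ ρ p (0, u p) := by
    rw [← map_add, Prod.mk_add_mk, add_zero, zero_add]
  have hρ_x := (hdρ p).hasFDerivAt_comp_const_prodMk
  have hu_x := (hdu p).hasFDerivAt_comp_const_prodMk
  rw [sum_fderiv_mul_apply_single hρ_x.differentiableAt hu_x.differentiableAt, hρ_x.fderiv,
    hu_x.fderiv, (hdρ p).hasDerivAt_comp_prodMk_const.deriv]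
  simp only [comp_apply, inr_apply]
  linear_combination hbalance - hsplit
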